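/- For any symmetric tridiagonal $n\times n$ matrix $W$, with $A$ a nondegenerate Jacobi matrix with distinct eigenvalues, orthogonal eigenvector matrix $O$, eigenvalues $\lambda_i$ and spectral weights $q_i$: $W + \sum_{i=1}^n (O^t W O)_{i,i}\, q_i^2\, G(\lambda_i) = \sum_{i>j} (O^t W O)_{i,j}\, q_i q_j\, \frac{B(\lambda_i,\lambda_i) - B(\lambda_j,\lambda_j)}{\lambda_i - \lambda_j}$. -/

import Mathlib

/-!
Write `D F` for the derivative at `t = 0` of `t ↦ F(A + t W)`. In the eigenbasis of `A`, `D F` is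
the Daleckii–Krein matrix `(OᵗWO)ᵢⱼ F[λᵢ, λⱼ]` of divided differences; as the first column of `O`
is `q`, `(D F)₀₀ = ∑ᵢⱼ (OᵗWO)ᵢⱼ qᵢ qⱼ F[λᵢ, λⱼ]`. Entrywise, `B(x, x) = F x` and `G(x) = -F' x / 2`
for an explicit combination `F` of products `pⱼ pₘ`, so once the diagonal `i = j` is split off the
double sum, the claim becomes `Wₖₗ = (D F)₀₀ / 2`. Because `pⱼ(A) e₀ = eⱼ`, this is a statement
about the columns `uⱼ = (D pⱼ) e₀`: applying `D` to the three-term recurrence gives a recurrence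
for them, and the tridiagonality of `W` makes `uⱼ` vanish beyond index `j`.
-/

open Polynomial Finset Matrix

namespace Polynomial

section AevalDeriv

open TrivSqZeroExt

variable {K R S : Type*} [CommSemiring K] [Semiring R] [Algebra K R] [Semiring S] [Algebra K S]

/-- The derivative at `t = 0` of `t ↦ F(a + t w)`, computed by evaluating `F` at the dual number
`a + w ε`. -/
noncomputable def aevalDeriv (a w : R) (F : K[X]) : R :=
  (aeval (inl a + inr w : DualNumber R) F).snd

variable (a w : R) (F G : K[X])

theorem fst_aeval_inl_add_inr : (aeval (inl a + inr w : DualNumber R) F).fst = aeval a F := by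
  rw [← fstHom_apply (S := K), ← aeval_algHom_apply, fstHom_apply, fst_add, fst_inl, fst_inr,
    add_zero]

theorem aevalDeriv_add : aevalDeriv a w (F + G) = aevalDeriv a w F + aevalDeriv a w G := by
  simp only [aevalDeriv, map_add, snd_add]

theorem aevalDeriv_C (c : K) : aevalDeriv a w (C c) = 0 := by
  simp only [aevalDeriv, aeval_C, algebraMap_eq_inl', snd_inl]

theorem aevalDeriv_X : aevalDeriv a w (X : K[X]) = w := by
  simp only [aevalDeriv, aeval_X, snd_add, snd_inl, snd_inr, zero_add]

theorem aevalDeriv_mul :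
    aevalDeriv a w (F * G) = aeval a F * aevalDeriv a w G + aevalDeriv a w F * aeval a G := by
  simp only [aevalDeriv, map_mul, DualNumber.snd_mul, fst_aeval_inl_add_inr]

theorem aevalDeriv_C_mul (c : K) : aevalDeriv a w (C c * F) = c • aevalDeriv a w F := by
  simp [aevalDeriv_mul, aevalDeriv_C, Algebra.smul_def]

theorem map_aevalDeriv (φ : R →ₐ[K] S) : φ (aevalDeriv a w F) = aevalDeriv (φ a) (φ w) F := by
  induction F using Polynomial.induction_on with
  | C c => simp [aevalDeriv_C]
  | add F G hF hG => simp [aevalDeriv_add, hF, hG]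
  | monomial k c ih =>
    rw [pow_succ, ← mul_assoc, aevalDeriv_mul a w _ X, aevalDeriv_mul (φ a) (φ w) _ X, map_add φ,
      map_mul φ, map_mul φ, ih, aevalDeriv_X, aevalDeriv_X, aeval_algHom_apply, aeval_algHom_apply]

theorem aevalDeriv_conj_of_mul_eq_one {u v : R} (huv : u * v = 1) (hvu : v * u = 1) :
    aevalDeriv (u * a * v) (u * w * v) F = u * aevalDeriv a w F * v := by
  simpa [ConjAct.units_smul_def] using (map_aevalDeriv a w F (MulSemiringAction.toAlgEquiv K R
    (ConjAct.toConjAct (⟨u, v, huv, hvu⟩ : Rˣ))).toAlgHom).symm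

theorem aeval_conj_of_mul_eq_one {u v : R} (huv : u * v = 1) (hvu : v * u = 1) :
    aeval (u * a * v) F = u * aeval a F * v := by
  simpa [ConjAct.units_smul_def] using aeval_algHom_apply (MulSemiringAction.toAlgEquiv K R
    (ConjAct.toConjAct (⟨u, v, huv, hvu⟩ : Rˣ))).toAlgHom a F

end AevalDeriv

end Polynomial

section DSlope

variable {𝕜 : Type*} [NontriviallyNormedField 𝕜]

theorem dslope_const {E : Type*} [NormedAddCommGroup E] [NormedSpace 𝕜 E] (c : E) (a b : 𝕜) :
    dslope (fun _ => c) a b = 0 := by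
  rcases eq_or_ne b a with rfl | h
  · simp [dslope_same]
  · simp [dslope_of_ne _ h, slope]

theorem dslope_id (a b : 𝕜) : dslope id a b = 1 := by
  rcases eq_or_ne b a with rfl | h
  · simp [dslope_same]
  · simp [dslope_of_ne _ h, slope, sub_ne_zero.mpr h]

theorem dslope_comm (f : 𝕜 → 𝕜) (a b : 𝕜) : dslope f a b = dslope f b a := by
  rcases eq_or_ne b a with rfl | h
  · rfl
  · rw [dslope_of_ne _ h, dslope_of_ne _ h.symm, slope_comm]

theorem dslope_add {f g : 𝕜 → 𝕜} {a : 𝕜} (hf : DifferentiableAt 𝕜 f a)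
    (hg : DifferentiableAt 𝕜 g a) (b : 𝕜) :
    dslope (fun x => f x + g x) a b = dslope f a b + dslope g a b := by
  rcases eq_or_ne b a with rfl | h
  · simp only [dslope_same]
    exact deriv_add hf hg
  · simp only [dslope_of_ne _ h, slope_def_field]
    ring

theorem dslope_mul {f g : 𝕜 → 𝕜} {a : 𝕜} (hf : DifferentiableAt 𝕜 f a)
    (hg : DifferentiableAt 𝕜 g a) (b : 𝕜) :
    dslope (fun x => f x * g x) a b = dslope f a b * g b + f a * dslope g a b := by
  rcases eq_or_ne b a with rfl | h
  · simp only [dslope_same]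
    exact deriv_mul hf hg
  · simp only [dslope_of_ne _ h, slope_def_field]
    field_simp [sub_ne_zero.mpr h]
    ring

theorem Polynomial.dslope_eval_mul (F G : 𝕜[X]) (a b : 𝕜) :
    dslope (fun x => (F * G).eval x) a b =
      dslope (fun x => F.eval x) a b * G.eval b + F.eval a * dslope (fun x => G.eval x) a b := by
  simp only [eval_mul]
  exact dslope_mul F.differentiableAt G.differentiableAt b

end DSlope

namespace Matrix

theorem transpose_mul_mul_apply {ι R : Type*} [Fintype ι] [CommSemiring R] (O M : Matrix ι ι R)
    (k l : ι) : (Oᵀ * M * O) k l = ∑ i, ∑ j, M i j * O i k * O j l := by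
  simp only [mul_apply, transpose_apply, Finset.sum_mul]
  rw [Finset.sum_comm]
  exact Finset.sum_congr rfl fun i _ => Finset.sum_congr rfl fun j _ => by ring

variable {ι 𝕜 : Type*} [Fintype ι] [DecidableEq ι]

theorem transpose_aeval [CommSemiring 𝕜] (A : Matrix ι ι 𝕜) (F : 𝕜[X]) :
    (aeval A F)ᵀ = aeval Aᵀ F := by
  simpa [aeval_op_apply] using (aeval_algHom_apply (transposeAlgEquiv ι 𝕜 𝕜).toAlgHom A F).symm

theorem aeval_diagonal [CommSemiring 𝕜] (d : ι → 𝕜) (F : 𝕜[X]) :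
    aeval (diagonal d) F = diagonal fun i => F.eval (d i) := by
  rw [← diagonalAlgHom_apply 𝕜, aeval_algHom_apply, aeval_pi_apply]
  simp

theorem aevalDeriv_transpose [CommSemiring 𝕜] (A W : Matrix ι ι 𝕜) (F : 𝕜[X]) :
    (aevalDeriv A W F)ᵀ = aevalDeriv Aᵀ Wᵀ F := by
  induction F using Polynomial.induction_on with
  | C c => simp [aevalDeriv_C]
  | add F G hF hG => simp [aevalDeriv_add, hF, hG]
  | monomial k c ih =>
    rw [pow_succ, ← mul_assoc, aevalDeriv_mul A W _ X, mul_comm _ X, aevalDeriv_mul Aᵀ Wᵀ X,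
      transpose_add, transpose_mul, transpose_mul, ih, transpose_aeval, aevalDeriv_X,
      aevalDeriv_X, aeval_X, aeval_X, add_comm]

theorem aevalDeriv_diagonal [NontriviallyNormedField 𝕜] (d : ι → 𝕜) (W : Matrix ι ι 𝕜)
    (F : 𝕜[X]) :
    aevalDeriv (diagonal d) W F = of fun i j => W i j * dslope (fun x => F.eval x) (d i) (d j) := by
  induction F using Polynomial.induction_on with
  | C c => ext; simp [aevalDeriv_C, dslope_const]
  | add F G hF hG =>
    ext i j
    simp only [aevalDeriv_add, hF, hG, Matrix.add_apply, of_apply, eval_add]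
    rw [dslope_add F.differentiableAt G.differentiableAt, mul_add]
  | monomial k c ih =>
    ext i j
    rw [pow_succ, ← mul_assoc, aevalDeriv_mul, ih, aevalDeriv_X, aeval_diagonal, aeval_X,
      Matrix.add_apply, diagonal_mul, mul_diagonal, of_apply, of_apply,
      dslope_eval_mul (C c * X ^ k) X]
    have hX : dslope (fun x => eval x (X : 𝕜[X])) (d i) (d j) = 1 := by
      simp only [eval_X]
      exact dslope_id _ _
    rw [hX, eval_X]
    ring

variable {O A : Matrix ι ι ℝ} {lam : ι → ℝ}

theorem eq_transpose_mul_mul (hO : Oᵀ * O = 1) (M : Matrix ι ι ℝ) :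
    M = Oᵀ * (O * M * Oᵀ) * O := by
  simp only [← mul_assoc, hO, one_mul]
  rw [mul_assoc, hO, mul_one]

theorem aeval_eq_of_orthogonal (hO₁ : O * Oᵀ = 1) (hO₂ : Oᵀ * O = 1)
    (hdiag : O * A * Oᵀ = diagonal lam) (F : ℝ[X]) :
    aeval A F = Oᵀ * diagonal (fun i => F.eval (lam i)) * O := by
  rw [eq_transpose_mul_mul hO₂ A, hdiag, aeval_conj_of_mul_eq_one _ _ hO₂ hO₁, aeval_diagonal]

theorem aevalDeriv_eq_of_orthogonal (hO₁ : O * Oᵀ = 1) (hO₂ : Oᵀ * O = 1)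
    (hdiag : O * A * Oᵀ = diagonal lam) (W : Matrix ι ι ℝ) (F : ℝ[X]) :
    aevalDeriv A W F =
      Oᵀ * (of fun i j => (O * W * Oᵀ) i j * dslope (fun x => F.eval x) (lam i) (lam j)) * O := by
  conv_lhs => rw [eq_transpose_mul_mul hO₂ A, eq_transpose_mul_mul hO₂ W, hdiag]
  rw [aevalDeriv_conj_of_mul_eq_one _ _ _ hO₂ hO₁, aevalDeriv_diagonal]

end Matrix

section Jacobi

variable {n : ℕ}

/-- The `k`-th standard basis vector of `Fin n → ℝ`, read as `0` when `n ≤ k`. -/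
def natSingle (n k : ℕ) : Fin n → ℝ := fun m => if (m : ℕ) = k then 1 else 0

theorem natSingle_of_lt {k : ℕ} (hk : k < n) : natSingle n k = Pi.single ⟨k, hk⟩ 1 := by
  ext m
  simp [natSingle, Pi.single_apply, Fin.ext_iff]

theorem natSingle_of_le {k : ℕ} (hk : n ≤ k) : natSingle n k = 0 := by
  ext m
  simp only [natSingle, Pi.zero_apply, ite_eq_right_iff, one_ne_zero]
  omega

/-- The entry `(i, j)` of `M`, read as `0` outside the index range. -/
def natEntry (M : Matrix (Fin n) (Fin n) ℝ) (i j : ℕ) : ℝ := natSingle n i ⬝ᵥ M *ᵥ natSingle n j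

theorem natEntry_of_lt (M : Matrix (Fin n) (Fin n) ℝ) {i j : ℕ} (hi : i < n) (hj : j < n) :
    natEntry M i j = M ⟨i, hi⟩ ⟨j, hj⟩ := by
  simp [natEntry, natSingle_of_lt hi, natSingle_of_lt hj]

theorem natEntry_of_le_right (M : Matrix (Fin n) (Fin n) ℝ) (i : ℕ) {j : ℕ} (hj : n ≤ j) :
    natEntry M i j = 0 := by
  simp [natEntry, natSingle_of_le hj]

theorem natEntry_transpose (M : Matrix (Fin n) (Fin n) ℝ) (i j : ℕ) :
    natEntry Mᵀ i j = natEntry M j i := by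
  rw [natEntry, natEntry, mulVec_transpose, dotProduct_comm, dotProduct_mulVec]

theorem natEntry_add (M N : Matrix (Fin n) (Fin n) ℝ) (i j : ℕ) :
    natEntry (M + N) i j = natEntry M i j + natEntry N i j := by
  simp [natEntry, add_mulVec]

theorem natEntry_smul (c : ℝ) (M : Matrix (Fin n) (Fin n) ℝ) (i j : ℕ) :
    natEntry (c • M) i j = c * natEntry M i j := by
  simp [natEntry, smul_mulVec]

theorem natEntry_mul_of_mulVec_eq (M N : Matrix (Fin n) (Fin n) ℝ) {i j k : ℕ}
    (hN : N *ᵥ natSingle n j = natSingle n k) : natEntry (M * N) i j = natEntry M i k := by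
  rw [natEntry, ← mulVec_mulVec, hN, natEntry]

theorem natEntry_mul_of_transpose_mulVec_eq (M N : Matrix (Fin n) (Fin n) ℝ) {i j k : ℕ}
    (hM : Mᵀ *ᵥ natSingle n i = natSingle n k) : natEntry (M * N) i j = natEntry N k j := by
  rw [← natEntry_transpose, transpose_mul, natEntry_mul_of_mulVec_eq _ _ hM, natEntry_transpose]

/-- The Jacobi matrix with diagonal `b 1, …, b n` and off-diagonal `a 1, …, a (n - 1)`. -/
def jacobiMatrix (n : ℕ) (a b : ℕ → ℝ) : Matrix (Fin n) (Fin n) ℝ :=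
  of fun i j => if (i : ℕ) = j then b (i + 1) else if (i : ℕ) + 1 = j then a (i + 1)
    else if (j : ℕ) + 1 = i then a (j + 1) else 0

variable {a b : ℕ → ℝ}

theorem jacobiMatrix_transpose : (jacobiMatrix n a b)ᵀ = jacobiMatrix n a b := by
  ext i j
  simp only [transpose_apply, jacobiMatrix, of_apply]
  split_ifs <;> first | rfl | omega | (congr 1; omega)

theorem jacobiMatrix_mulVec_natSingle (ha0 : a 0 = 0) {k : ℕ} (hk : k < n) :
    jacobiMatrix n a b *ᵥ natSingle n k =
      a k • natSingle n (k - 1) + b (k + 1) • natSingle n k + a (k + 1) • natSingle n (k + 1) := by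
  ext ⟨m, hm⟩
  conv_lhs => rw [natSingle_of_lt hk, mulVec_single_one]
  simp only [col_apply, jacobiMatrix, of_apply, Pi.add_apply, Pi.smul_apply, natSingle, smul_eq_mul]
  -- for `k = 0` the truncated `k - 1` is `0`, and the spurious term is killed by `a 0 = 0`
  split_ifs <;> simp only [mul_one, mul_zero, add_zero, zero_add] <;>
    first | omega | (congr 1 <;> omega) | (obtain ⟨rfl, rfl⟩ : m = 0 ∧ k = 0 := (by omega); simp [ha0])

theorem natEntry_mul_jacobiMatrix (ha0 : a 0 = 0) (M : Matrix (Fin n) (Fin n) ℝ) (i : ℕ) {j : ℕ}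
    (hj : j < n) :
    natEntry (M * jacobiMatrix n a b) i j = a j * natEntry M i (j - 1) + b (j + 1) * natEntry M i j
      + a (j + 1) * natEntry M i (j + 1) := by
  simp only [natEntry, ← mulVec_mulVec, jacobiMatrix_mulVec_natSingle ha0 hj, mulVec_add,
    mulVec_smul, dotProduct_add, dotProduct_smul, smul_eq_mul]

variable {p : ℕ → ℝ[X]} {A W : Matrix (Fin n) (Fin n) ℝ}

theorem X_mul_eq_of_three_term (ha0 : a 0 = 0)
    (hbase : X * p 0 = C (a 1) * p 1 + C (b 1) * p 0)
    (hrec : ∀ k, X * p (k + 1) = C (a (k + 2)) * p (k + 2) + C (b (k + 2)) * p (k + 1)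
      + C (a (k + 1)) * p k) (k : ℕ) :
    X * p k = C (a (k + 1)) * p (k + 1) + C (b (k + 1)) * p k + C (a k) * p (k - 1) := by
  cases k with
  | zero => simpa [ha0] using hbase
  | succ k => simpa using hrec k

theorem natEntry_aevalDeriv_mul (hA : Aᵀ = A) (hW : Wᵀ = W) {F G : ℝ[X]} {j m : ℕ}
    (hF : aeval A F *ᵥ natSingle n 0 = natSingle n j)
    (hG : aeval A G *ᵥ natSingle n 0 = natSingle n m) :
    natEntry (aevalDeriv A W (F * G)) 0 0 =
      natEntry (aevalDeriv A W F) 0 m + natEntry (aevalDeriv A W G) 0 j := by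
  have hF' : (aeval A F)ᵀ *ᵥ natSingle n 0 = natSingle n j := by rwa [transpose_aeval, hA]
  rw [aevalDeriv_mul, natEntry_add, natEntry_mul_of_transpose_mulVec_eq _ _ hF',
    natEntry_mul_of_mulVec_eq _ _ hG, ← natEntry_transpose, aevalDeriv_transpose, hA, hW, add_comm]

theorem natEntry_aevalDeriv_succ (ha0 : a 0 = 0)
    (hrec : ∀ k, X * p k = C (a (k + 1)) * p (k + 1) + C (b (k + 1)) * p k + C (a k) * p (k - 1))
    {k : ℕ} (hvec : aeval (jacobiMatrix n a b) (p k) *ᵥ natSingle n 0 = natSingle n k)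
    {j : ℕ} (hj : j < n) :
    a (k + 1) * natEntry (aevalDeriv (jacobiMatrix n a b) W (p (k + 1))) 0 j =
      a j * natEntry (aevalDeriv (jacobiMatrix n a b) W (p k)) 0 (j - 1)
      + (b (j + 1) - b (k + 1)) * natEntry (aevalDeriv (jacobiMatrix n a b) W (p k)) 0 j
      + a (j + 1) * natEntry (aevalDeriv (jacobiMatrix n a b) W (p k)) 0 (j + 1)
      - a k * natEntry (aevalDeriv (jacobiMatrix n a b) W (p (k - 1))) 0 j
      + natEntry W k j := by
  have hvec' : (aeval (jacobiMatrix n a b) (p k))ᵀ *ᵥ natSingle n 0 = natSingle n k := by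
    rwa [transpose_aeval, jacobiMatrix_transpose]
  have h := congrArg (fun F => natEntry (aevalDeriv (jacobiMatrix n a b) W F) 0 j) (hrec k)
  simp only [aevalDeriv_add, aevalDeriv_C_mul, natEntry_add, natEntry_smul] at h
  rw [mul_comm, aevalDeriv_mul, aevalDeriv_X, aeval_X, natEntry_add,
    natEntry_mul_of_transpose_mulVec_eq _ _ hvec', natEntry_mul_jacobiMatrix ha0 _ _ hj] at h
  linear_combination -h

theorem natEntry_aevalDeriv_eq_zero_of_lt (ha0 : a 0 = 0) (hpos : ∀ k, 1 ≤ k → k < n → 0 < a k)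
    (h0 : p 0 = 1)
    (hrec : ∀ k, X * p k = C (a (k + 1)) * p (k + 1) + C (b (k + 1)) * p k + C (a k) * p (k - 1))
    (hvec : ∀ k ≤ n, aeval (jacobiMatrix n a b) (p k) *ᵥ natSingle n 0 = natSingle n k)
    (hWtri : ∀ k l : Fin n, ((k : ℕ) + 1 < l ∨ (l : ℕ) + 1 < k) → W k l = 0) :
    ∀ k j, k < j → natEntry (aevalDeriv (jacobiMatrix n a b) W (p k)) 0 j = 0 := by
  intro k
  induction k using Nat.strong_induction_on with
  | _ k ih =>
  intro j hkj
  rcases lt_or_ge j n with hj | hj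
  · cases k with
    | zero => rw [h0, ← C_1, aevalDeriv_C]; simp [natEntry]
    | succ k =>
      have h := natEntry_aevalDeriv_succ (W := W) ha0 hrec (hvec k (by omega)) hj
      rw [ih k (by omega) _ (by omega), ih k (by omega) _ (by omega), ih k (by omega) _ (by omega),
        ih (k - 1) (by omega) _ (by omega), natEntry_of_lt W (by omega) hj,
        hWtri _ _ (Or.inl (by simp only; omega))] at h
      exact (mul_eq_zero.mp (by linarith)).resolve_left (hpos (k + 1) (by omega) (by omega)).ne'
  · exact natEntry_of_le_right _ _ hj

/-- The polynomial `x ↦ B(x, x)ₖₗ`. -/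
noncomputable def bPoly (a : ℕ → ℝ) (p : ℕ → ℝ[X]) (k l : ℕ) : ℝ[X] :=
  if k = l then C (2 * a (l + 1)) * (p l * p (l + 1)) + C (-(2 * a l)) * (p (l - 1) * p l)
  else if k = l + 1 then C (a (l + 1)) * (p (l + 1) * p (l + 1)) + C (-a (l + 1)) * (p l * p l)
  else if l = k + 1 then C (a (k + 1)) * (p (k + 1) * p (k + 1)) + C (-a (k + 1)) * (p k * p k)
  else 0

theorem natEntry_succ_eq_half_natEntry_aevalDeriv (ha0 : a 0 = 0)
    (hrec : ∀ k, X * p k = C (a (k + 1)) * p (k + 1) + C (b (k + 1)) * p k + C (a k) * p (k - 1))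
    (hvec : ∀ k ≤ n, aeval (jacobiMatrix n a b) (p k) *ᵥ natSingle n 0 = natSingle n k)
    (hW : Wᵀ = W)
    (hsupp : ∀ k j, k < j → natEntry (aevalDeriv (jacobiMatrix n a b) W (p k)) 0 j = 0)
    {m : ℕ} (hm : m + 1 < n) :
    natEntry W m (m + 1) = 1 / 2 * natEntry (aevalDeriv (jacobiMatrix n a b) W
      (C (a (m + 1)) * (p (m + 1) * p (m + 1)) + C (-a (m + 1)) * (p m * p m))) 0 0 := by
  have h := natEntry_aevalDeriv_succ (W := W) ha0 hrec (hvec m (by omega)) hm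
  rw [Nat.add_sub_cancel, hsupp m (m + 1) (by omega), hsupp m (m + 1 + 1) (by omega),
    hsupp (m - 1) (m + 1) (by omega)] at h
  rw [aevalDeriv_add, aevalDeriv_C_mul, aevalDeriv_C_mul, natEntry_add, natEntry_smul,
    natEntry_smul, natEntry_aevalDeriv_mul jacobiMatrix_transpose hW (hvec _ hm.le) (hvec _ hm.le),
    natEntry_aevalDeriv_mul jacobiMatrix_transpose hW (hvec m (by omega)) (hvec m (by omega))]
  linear_combination -h

theorem natEntry_eq_half_natEntry_aevalDeriv_bPoly (ha0 : a 0 = 0)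
    (hpos : ∀ k, 1 ≤ k → k < n → 0 < a k) (h0 : p 0 = 1)
    (hrec : ∀ k, X * p k = C (a (k + 1)) * p (k + 1) + C (b (k + 1)) * p k + C (a k) * p (k - 1))
    (hvec : ∀ k ≤ n, aeval (jacobiMatrix n a b) (p k) *ᵥ natSingle n 0 = natSingle n k)
    (hW : Wᵀ = W) (hWtri : ∀ k l : Fin n, ((k : ℕ) + 1 < l ∨ (l : ℕ) + 1 < k) → W k l = 0)
    {k l : ℕ} (hk : k < n) (hl : l < n) :
    natEntry W k l = 1 / 2 * natEntry (aevalDeriv (jacobiMatrix n a b) W (bPoly a p k l)) 0 0 := by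
  have hsupp := natEntry_aevalDeriv_eq_zero_of_lt ha0 hpos h0 hrec hvec hWtri
  unfold bPoly
  split_ifs with hkl hkl' hlk
  · subst hkl
    have h := natEntry_aevalDeriv_succ (W := W) ha0 hrec (hvec k hk.le) hk
    have hlow : a k * natEntry (aevalDeriv (jacobiMatrix n a b) W (p (k - 1))) 0 k = 0 := by
      rcases k with _ | k
      · simp [ha0]
      · rw [hsupp _ _ (by omega), mul_zero]
    rw [hsupp k (k + 1) (by omega)] at h
    rw [aevalDeriv_add, aevalDeriv_C_mul, aevalDeriv_C_mul, natEntry_add, natEntry_smul,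
      natEntry_smul, natEntry_aevalDeriv_mul jacobiMatrix_transpose hW (hvec k hk.le) (hvec _ hk),
      natEntry_aevalDeriv_mul jacobiMatrix_transpose hW (hvec _ (by omega)) (hvec k hk.le),
      hsupp k (k + 1) (by omega)]
    linear_combination -h + 2 * hlow
  · subst hkl'
    rw [← natEntry_succ_eq_half_natEntry_aevalDeriv ha0 hrec hvec hW hsupp hk,
      ← natEntry_transpose, hW]
  · subst hlk
    rw [← natEntry_succ_eq_half_natEntry_aevalDeriv ha0 hrec hvec hW hsupp hl]
  · rw [natEntry_of_lt W hk hl, hWtri _ _ (by simp only; omega)]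
    simp [aevalDeriv, natEntry]

end Jacobi

theorem sum_filter_lt_eq_half {ι : Type*} [Fintype ι] [LinearOrder ι] (g : ι → ι → ℝ)
    (hg : ∀ i j, g i j = g j i) :
    ∑ i, ∑ j ∈ univ.filter (· < i), g i j = (∑ i, ∑ j, g i j - ∑ i, g i i) / 2 := by
  have hsplit : ∀ i j, g i j =
      (if j < i then g i j else 0) + (if i < j then g i j else 0) + (if i = j then g i j else 0) := by
    intro i j
    rcases lt_trichotomy i j with h | rfl | h
    · simp [h, h.not_gt, h.ne]
    · simp
    · simp [h, h.not_gt, h.ne']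
  have hswap : ∑ i, ∑ j, (if i < j then g i j else 0) = ∑ i, ∑ j, if j < i then g i j else 0 := by
    rw [Finset.sum_comm]
    simp_rw [hg]
  simp only [Finset.sum_filter]
  conv_rhs => rw [Finset.sum_congr rfl fun i _ => Finset.sum_congr rfl fun j _ => hsplit i j]
  simp only [Finset.sum_add_distrib, hswap, Finset.sum_ite_eq, Finset.mem_univ, if_true]
  ring

theorem sum_filter_lt_mul_div_sub {ι : Type*} [Fintype ι] [LinearOrder ι] (c : ι → ι → ℝ)
    (hc : ∀ i j, c i j = c j i) (q : ι → ℝ) {d : ι → ℝ} (hd : Function.Injective d) (F : ℝ[X]) :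
    ∑ i, ∑ j ∈ univ.filter (· < i),
        c i j * q i * q j * (1 / (d i - d j)) * (F.eval (d i) - F.eval (d j)) =
      1 / 2 * ∑ i, ∑ j, c i j * q i * q j * dslope (fun x => F.eval x) (d i) (d j)
        + ∑ i, c i i * q i ^ 2 * (-(1 / 2) * F.derivative.eval (d i)) := by
  have hslope : ∀ i, ∀ j ∈ univ.filter (· < i),
      c i j * q i * q j * (1 / (d i - d j)) * (F.eval (d i) - F.eval (d j)) =
        c i j * q i * q j * dslope (fun x => F.eval x) (d i) (d j) := by
    intro i j hj
    have hne : d j ≠ d i := hd.ne (Finset.mem_filter.mp hj).2.ne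
    rw [dslope_of_ne _ hne, slope_def_field, mul_assoc]
    congr 1
    field_simp [sub_ne_zero.mpr hne, sub_ne_zero.mpr hne.symm]
    ring
  have hdiag : ∑ i, c i i * q i ^ 2 * (-(1 / 2) * F.derivative.eval (d i)) =
      -(1 / 2) * ∑ i, c i i * q i * q i * dslope (fun x => F.eval x) (d i) (d i) := by
    rw [Finset.mul_sum]
    exact Finset.sum_congr rfl fun i _ => by rw [dslope_same, Polynomial.deriv]; ring
  rw [Finset.sum_congr rfl fun i _ => Finset.sum_congr rfl (hslope i), hdiag,
    sum_filter_lt_eq_half _ fun i j => by rw [hc, dslope_comm]; ring]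
  ring

section Eigenbasis

variable {n : ℕ} {O A : Matrix (Fin n) (Fin n) ℝ} {lam q : Fin n → ℝ} {p : ℕ → ℝ[X]}

theorem mulVec_natSingle_zero (hn : 0 < n) (h0 : p 0 = 1)
    (hOM : ∀ i k, O i k = q i * (p k).eval (lam i)) : O *ᵥ natSingle n 0 = q := by
  ext i
  rw [natSingle_of_lt hn, mulVec_single_one, col_apply, hOM]
  simp [h0]

theorem aeval_mulVec_natSingle_zero (hn : 0 < n) (hO₁ : O * Oᵀ = 1) (hO₂ : Oᵀ * O = 1)
    (hdiag : O * A * Oᵀ = diagonal lam) (h0 : p 0 = 1)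
    (hOM : ∀ i k, O i k = q i * (p k).eval (lam i)) (heig : ∀ i, (p n).eval (lam i) = 0)
    {k : ℕ} (hk : k ≤ n) : aeval A (p k) *ᵥ natSingle n 0 = natSingle n k := by
  rw [aeval_eq_of_orthogonal hO₁ hO₂ hdiag, ← mulVec_mulVec, ← mulVec_mulVec,
    mulVec_natSingle_zero hn h0 hOM]
  rcases hk.lt_or_eq with hk | rfl
  · have hcol : diagonal (fun i => (p k).eval (lam i)) *ᵥ q = O *ᵥ natSingle n k := by
      ext i
      rw [mulVec_diagonal, natSingle_of_lt hk, mulVec_single_one, col_apply, hOM, mul_comm]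
    rw [hcol, mulVec_mulVec, hO₂, one_mulVec]
  · have hzero : diagonal (fun i => (p k).eval (lam i)) *ᵥ q = 0 := by
      ext i
      rw [mulVec_diagonal, heig, zero_mul, Pi.zero_apply]
    rw [hzero, mulVec_zero, natSingle_of_le le_rfl]

theorem natEntry_aevalDeriv_zero_zero (hn : 0 < n) (hO₁ : O * Oᵀ = 1) (hO₂ : Oᵀ * O = 1)
    (hdiag : O * A * Oᵀ = diagonal lam) (h0 : p 0 = 1)
    (hOM : ∀ i k, O i k = q i * (p k).eval (lam i)) (W : Matrix (Fin n) (Fin n) ℝ) (F : ℝ[X]) :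
    natEntry (aevalDeriv A W F) 0 0 =
      ∑ i, ∑ j, (O * W * Oᵀ) i j * q i * q j * dslope (fun x => F.eval x) (lam i) (lam j) := by
  rw [natEntry_of_lt _ hn hn, aevalDeriv_eq_of_orthogonal hO₁ hO₂ hdiag, transpose_mul_mul_apply]
  simp only [of_apply, hOM, h0, eval_one, mul_one]
  exact Finset.sum_congr rfl fun i _ => Finset.sum_congr rfl fun j _ => by ring

end Eigenbasis

theorem tridiagonal_orthogonality_rules_general
    (n : ℕ) (hn : 0 < n)
    (a b : ℕ → ℝ) (p : ℕ → Polynomial ℝ)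
    (ha0 : a 0 = 0)
    (hpos : ∀ k, 1 ≤ k → k < n → 0 < a k)
    (h0 : p 0 = 1)
    (hbase : (X : Polynomial ℝ) * p 0 = C (a 1) * p 1 + C (b 1) * p 0)
    (hrec : ∀ k : ℕ, (X : Polynomial ℝ) * p (k + 1) =
      C (a (k + 2)) * p (k + 2) + C (b (k + 2)) * p (k + 1) + C (a (k + 1)) * p k)
    (A : Matrix (Fin n) (Fin n) ℝ)
    (hA : ∀ i j : Fin n, A i j =
      if (i : ℕ) = (j : ℕ) then b ((i : ℕ) + 1)
      else if (i : ℕ) + 1 = (j : ℕ) then a ((i : ℕ) + 1)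
      else if (j : ℕ) + 1 = (i : ℕ) then a ((j : ℕ) + 1)
      else 0)
    (lam : Fin n → ℝ) (hlam : Function.Injective lam)
    (heig : ∀ i, (p n).eval (lam i) = 0)
    (q : Fin n → ℝ)
    (OM : Matrix (Fin n) (Fin n) ℝ)
    (hOM : ∀ (i k : Fin n), OM i k = q i * (p (k : ℕ)).eval (lam i))
    (hOrth1 : OM * OMᵀ = 1) (hOrth2 : OMᵀ * OM = 1)
    (hdiag : OM * A * OMᵀ = Matrix.diagonal lam)
    (Bm : ℝ → ℝ → Matrix (Fin n) (Fin n) ℝ)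
    (hB : ∀ (x y : ℝ) (k l : Fin n), Bm x y k l =
      if (k : ℕ) = (l : ℕ) then
        -(a (l : ℕ)) * (p ((l : ℕ) - 1)).eval x * (p (l : ℕ)).eval y
          + a ((l : ℕ) + 1) * (p (l : ℕ)).eval x * (p ((l : ℕ) + 1)).eval y
          - a (l : ℕ) * (p (l : ℕ)).eval x * (p ((l : ℕ) - 1)).eval y
          + a ((l : ℕ) + 1) * (p ((l : ℕ) + 1)).eval x * (p (l : ℕ)).eval y
      else if (k : ℕ) = (l : ℕ) + 1 then
        -(a ((l : ℕ) + 1)) * ((p (l : ℕ)).eval x * (p (l : ℕ)).eval y -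
          (p ((l : ℕ) + 1)).eval x * (p ((l : ℕ) + 1)).eval y)
      else if (l : ℕ) = (k : ℕ) + 1 then
        -(a ((k : ℕ) + 1)) * ((p (k : ℕ)).eval x * (p (k : ℕ)).eval y -
          (p ((k : ℕ) + 1)).eval x * (p ((k : ℕ) + 1)).eval y)
      else 0)
    (Gm : ℝ → Matrix (Fin n) (Fin n) ℝ)
    (hG : ∀ (x : ℝ) (k l : Fin n), Gm x k l =
      if (k : ℕ) = (l : ℕ) then
        a (l : ℕ) * (p ((l : ℕ) - 1)).eval x * (derivative (p (l : ℕ))).eval x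
          - a ((l : ℕ) + 1) * (p (l : ℕ)).eval x * (derivative (p ((l : ℕ) + 1))).eval x
          + a (l : ℕ) * (p (l : ℕ)).eval x * (derivative (p ((l : ℕ) - 1))).eval x
          - a ((l : ℕ) + 1) * (p ((l : ℕ) + 1)).eval x * (derivative (p (l : ℕ))).eval x
      else if (k : ℕ) = (l : ℕ) + 1 then
        a ((l : ℕ) + 1) * ((p (l : ℕ)).eval x * (derivative (p (l : ℕ))).eval x -
          (p ((l : ℕ) + 1)).eval x * (derivative (p ((l : ℕ) + 1))).eval x)
      else if (l : ℕ) = (k : ℕ) + 1 then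
        a ((k : ℕ) + 1) * ((p (k : ℕ)).eval x * (derivative (p (k : ℕ))).eval x -
          (p ((k : ℕ) + 1)).eval x * (derivative (p ((k : ℕ) + 1))).eval x)
      else 0)
    (W : Matrix (Fin n) (Fin n) ℝ)
    (hWsymm : Wᵀ = W)
    (hWtri : ∀ k l : Fin n, ((k : ℕ) + 1 < (l : ℕ) ∨ (l : ℕ) + 1 < (k : ℕ)) →
      W k l = 0) :
    W + ∑ i, ((OM * W * OMᵀ) i i * q i ^ 2) • Gm (lam i) =
      ∑ i, ∑ j ∈ Finset.univ.filter (fun j => j < i),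
        ((OM * W * OMᵀ) i j * q i * q j * (1 / (lam i - lam j))) •
          (Bm (lam i) (lam i) - Bm (lam j) (lam j)) := by
  obtain rfl : A = jacobiMatrix n a b := by ext i j; exact hA i j
  have hvec := fun k (hk : k ≤ n) => aeval_mulVec_natSingle_zero hn hOrth1 hOrth2 hdiag h0 hOM heig hk
  ext k l
  have hW := natEntry_eq_half_natEntry_aevalDeriv_bPoly ha0 hpos h0
    (X_mul_eq_of_three_term ha0 hbase hrec) hvec hWsymm hWtri k.isLt l.isLt
  rw [natEntry_of_lt _ k.isLt l.isLt, natEntry_aevalDeriv_zero_zero hn hOrth1 hOrth2 hdiag h0 hOM]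
    at hW
  set F := bPoly a p k l
  have hBF : ∀ x, Bm x x k l = F.eval x := fun x => by
    rw [hB]
    simp only [F, bPoly]
    split_ifs <;> simp only [eval_add, eval_mul, eval_C, eval_zero] <;> ring
  have hGF : ∀ x, Gm x k l = -(1 / 2) * F.derivative.eval x := fun x => by
    rw [hG]
    simp only [F, bPoly]
    split_ifs <;> simp only [derivative_add, derivative_mul, derivative_C, derivative_zero, eval_add,
      eval_mul, eval_C, eval_zero] <;> ring
  have hc : ∀ i j, (OM * W * OMᵀ) i j = (OM * W * OMᵀ) j i := fun i j => by
    rw [← transpose_apply (OM * W * OMᵀ) j i, transpose_mul, transpose_mul, transpose_transpose,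
      hWsymm, Matrix.mul_assoc]
  simp only [Matrix.add_apply, Matrix.sum_apply, Matrix.smul_apply, smul_eq_mul, Matrix.sub_apply,
    hBF, hGF]
  rw [sum_filter_lt_mul_div_sub _ hc _ hlam, hW]

/-- Orthogonality rules for a symmetric tridiagonal `W`:
`W + ∑ᵢ (OᵗWO)ᵢᵢ qᵢ² G(λᵢ) = ∑_{i>j} (OᵗWO)ᵢⱼ qᵢqⱼ (B(λᵢ,λᵢ) - B(λⱼ,λⱼ))/(λᵢ-λⱼ)`. -/
theorem tridiagonal_orthogonality_rules
    (n : ℕ) (hn : 0 < n)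
    (a b : ℕ → ℝ) (p : ℕ → Polynomial ℝ)
    (ha0 : a 0 = 0) (han : a n = 1)
    (hpos : ∀ k, 1 ≤ k → k < n → 0 < a k)
    (h0 : p 0 = 1)
    (hbase : (X : Polynomial ℝ) * p 0 = C (a 1) * p 1 + C (b 1) * p 0)
    (hrec : ∀ k : ℕ, (X : Polynomial ℝ) * p (k + 1) =
      C (a (k + 2)) * p (k + 2) + C (b (k + 2)) * p (k + 1) + C (a (k + 1)) * p k)
    (A : Matrix (Fin n) (Fin n) ℝ)
    (hA : ∀ i j : Fin n, A i j =
      if (i : ℕ) = (j : ℕ) then b ((i : ℕ) + 1)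
      else if (i : ℕ) + 1 = (j : ℕ) then a ((i : ℕ) + 1)
      else if (j : ℕ) + 1 = (i : ℕ) then a ((j : ℕ) + 1)
      else 0)
    (lam : Fin n → ℝ) (hlam : Function.Injective lam)
    (heig : ∀ i, (p n).eval (lam i) = 0)
    (q : Fin n → ℝ) (hq0 : ∀ i, q i ≠ 0)
    (OM : Matrix (Fin n) (Fin n) ℝ)
    (hOM : ∀ (i k : Fin n), OM i k = q i * (p (k : ℕ)).eval (lam i))
    (hOrth1 : OM * OMᵀ = 1) (hOrth2 : OMᵀ * OM = 1)
    (hdiag : OM * A * OMᵀ = Matrix.diagonal lam)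
    (Bm : ℝ → ℝ → Matrix (Fin n) (Fin n) ℝ)
    (hB : ∀ (x y : ℝ) (k l : Fin n), Bm x y k l =
      if (k : ℕ) = (l : ℕ) then
        -(a (l : ℕ)) * (p ((l : ℕ) - 1)).eval x * (p (l : ℕ)).eval y
          + a ((l : ℕ) + 1) * (p (l : ℕ)).eval x * (p ((l : ℕ) + 1)).eval y
          - a (l : ℕ) * (p (l : ℕ)).eval x * (p ((l : ℕ) - 1)).eval y
          + a ((l : ℕ) + 1) * (p ((l : ℕ) + 1)).eval x * (p (l : ℕ)).eval y
      else if (k : ℕ) = (l : ℕ) + 1 then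
        -(a ((l : ℕ) + 1)) * ((p (l : ℕ)).eval x * (p (l : ℕ)).eval y -
          (p ((l : ℕ) + 1)).eval x * (p ((l : ℕ) + 1)).eval y)
      else if (l : ℕ) = (k : ℕ) + 1 then
        -(a ((k : ℕ) + 1)) * ((p (k : ℕ)).eval x * (p (k : ℕ)).eval y -
          (p ((k : ℕ) + 1)).eval x * (p ((k : ℕ) + 1)).eval y)
      else 0)
    (Gm : ℝ → Matrix (Fin n) (Fin n) ℝ)
    (hG : ∀ (x : ℝ) (k l : Fin n), Gm x k l =
      if (k : ℕ) = (l : ℕ) then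
        a (l : ℕ) * (p ((l : ℕ) - 1)).eval x * (derivative (p (l : ℕ))).eval x
          - a ((l : ℕ) + 1) * (p (l : ℕ)).eval x * (derivative (p ((l : ℕ) + 1))).eval x
          + a (l : ℕ) * (p (l : ℕ)).eval x * (derivative (p ((l : ℕ) - 1))).eval x
          - a ((l : ℕ) + 1) * (p ((l : ℕ) + 1)).eval x * (derivative (p (l : ℕ))).eval x
      else if (k : ℕ) = (l : ℕ) + 1 then
        a ((l : ℕ) + 1) * ((p (l : ℕ)).eval x * (derivative (p (l : ℕ))).eval x -
          (p ((l : ℕ) + 1)).eval x * (derivative (p ((l : ℕ) + 1))).eval x)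
      else if (l : ℕ) = (k : ℕ) + 1 then
        a ((k : ℕ) + 1) * ((p (k : ℕ)).eval x * (derivative (p (k : ℕ))).eval x -
          (p ((k : ℕ) + 1)).eval x * (derivative (p ((k : ℕ) + 1))).eval x)
      else 0)
    (W : Matrix (Fin n) (Fin n) ℝ)
    (hWsymm : Wᵀ = W)
    (hWtri : ∀ k l : Fin n, ((k : ℕ) + 1 < (l : ℕ) ∨ (l : ℕ) + 1 < (k : ℕ)) →
      W k l = 0) :
    W + ∑ i, ((OM * W * OMᵀ) i i * q i ^ 2) • Gm (lam i) =
      ∑ i, ∑ j ∈ Finset.univ.filter (fun j => j < i),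
        ((OM * W * OMᵀ) i j * q i * q j * (1 / (lam i - lam j))) •
          (Bm (lam i) (lam i) - Bm (lam j) (lam j)) :=
  tridiagonal_orthogonality_rules_general n hn a b p ha0 hpos h0 hbase hrec A hA lam hlam heig q OM
    hOM hOrth1 hOrth2 hdiag Bm hB Gm hG W hWsymm hWtri
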